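/- Monotonicity of the sharp square: if h, k ∈ Sym²(g) are positive semidefinite with h ≥ k ≥ 0, then h# := (1/2) h # h satisfies h# ≥ k#, where ≥ means the difference is positive semidefinite. -/

import Mathlib

open scoped BigOperators

/-- The coordinate form of the `#` operation on `Sym²(g)` (elements of `Sym²(g)` being
recorded by their coefficient matrices `h^{αβ}` in a chosen basis):
`(h#k)^{αβ} = c^α_{εδ} c^β_{γθ} h^{εγ} k^{δθ}`, where `c` are the structure constants. -/
def sharpMatR {ι : Type*} [Fintype ι] (c : ι → ι → ι → ℝ) (h k : ι → ι → ℝ) : ι → ι → ℝ :=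
  fun α β => ∑ ε, ∑ δ, ∑ γ, ∑ θ, c ε δ α * c γ θ β * h ε γ * k δ θ

/-- The quadratic square `h# = (1/2) h # h`. -/
noncomputable def sharpSqR {ι : Type*} [Fintype ι] (c : ι → ι → ι → ℝ) (h : ι → ι → ℝ) : ι → ι → ℝ :=
  fun α β => (1 / 2 : ℝ) * sharpMatR c h h α β

/-- Evaluation of a form `h ∈ Sym²(g)` on a dual vector `ξ ∈ g*` (given by coordinates). -/
def quadR {ι : Type*} [Fintype ι] (h : ι → ι → ℝ) (ξ : ι → ℝ) : ℝ :=
  ∑ α, ∑ β, ξ α * ξ β * h α β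

/-- A coefficient matrix is symmetric. -/
def SymmMatR {ι : Type*} (h : ι → ι → ℝ) : Prop := ∀ α β, h α β = h β α

/-- Positive semidefiniteness of a form on `g*`. -/
def PosSemidefR {ι : Type*} [Fintype ι] (h : ι → ι → ℝ) : Prop := ∀ ξ : ι → ℝ, 0 ≤ quadR h ξ

/-- Positive definiteness of a form on `g*`. -/
def PosDefR {ι : Type*} [Fintype ι] (h : ι → ι → ℝ) : Prop :=
  ∀ ξ : ι → ℝ, ξ ≠ 0 → 0 < quadR h ξ

/-- Structure constants of a Lie algebra relative to a basis. -/
noncomputable def structConst {ι : Type*} [Fintype ι] (L : Type*) [LieRing L] [LieAlgebra ℝ L]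
    (b : Module.Basis ι ℝ L) : ι → ι → ι → ℝ :=
  fun i j k => b.repr ⁅b i, b j⁆ k

/-!
Since `#` is bilinear, `h# - k# = ½ ((h - k) # h + k # (h - k))`, so it suffices that `a # b ≥ 0`
whenever `a, b ≥ 0`. Evaluated at `ξ`, the form `a # b` is `vᵀ (a ⊗ b) v` for the vector
`v_{εδ} = ∑_α ξ_α c^α_{εδ} = ξ([e_ε, e_δ])` indexed by pairs, and the Kronecker product of positive
semidefinite matrices is positive semidefinite.
-/

section

open Matrix
open scoped Kronecker

theorem sum_smul_dotProduct_mulVec_sum_smul {R ι m : Type*} [CommSemiring R] [Fintype ι]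
    [Fintype m] (K : Matrix m m R) (u : ι → m → R) (ξ : ι → R) :
    (∑ i, ξ i • u i) ⬝ᵥ (K *ᵥ ∑ j, ξ j • u j)
      = ∑ i, ∑ j, ξ i * ξ j * (u i ⬝ᵥ (K *ᵥ u j)) := by
  simp only [sum_dotProduct, dotProduct_sum, mulVec_sum, mulVec_smul, smul_dotProduct,
    dotProduct_smul, smul_eq_mul, Finset.mul_sum]
  rw [Finset.sum_comm]
  exact Finset.sum_congr rfl fun i _ => Finset.sum_congr rfl fun j _ => by ring

theorem SymmMatR.sub {ι : Type*} {h k : ι → ι → ℝ} (hh : SymmMatR h) (hk : SymmMatR k) :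
    SymmMatR (h - k) := fun α β => by simp only [Pi.sub_apply, hh α β, hk α β]

variable {ι : Type*} [Fintype ι]

theorem quadR_eq_dotProduct_mulVec (h : ι → ι → ℝ) (ξ : ι → ℝ) :
    quadR h ξ = ξ ⬝ᵥ (of h *ᵥ ξ) := by
  simp only [quadR, dotProduct, mulVec, of_apply, Finset.mul_sum]
  exact Finset.sum_congr rfl fun α _ => Finset.sum_congr rfl fun β _ => by ring

theorem quadR_add (h k : ι → ι → ℝ) (ξ : ι → ℝ) : quadR (h + k) ξ = quadR h ξ + quadR k ξ := by
  simp only [quadR, Pi.add_apply, mul_add, Finset.sum_add_distrib]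

theorem quadR_smul (r : ℝ) (h : ι → ι → ℝ) (ξ : ι → ℝ) : quadR (r • h) ξ = r * quadR h ξ := by
  simp only [quadR, Pi.smul_apply, smul_eq_mul, Finset.mul_sum]
  exact Finset.sum_congr rfl fun α _ => Finset.sum_congr rfl fun β _ => by ring

theorem PosSemidefR.add {h k : ι → ι → ℝ} (hh : PosSemidefR h) (hk : PosSemidefR k) :
    PosSemidefR (h + k) := fun ξ => quadR_add h k ξ ▸ add_nonneg (hh ξ) (hk ξ)

theorem PosSemidefR.smul {h : ι → ι → ℝ} (hh : PosSemidefR h) {r : ℝ} (hr : 0 ≤ r) :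
    PosSemidefR (r • h) := fun ξ => quadR_smul r h ξ ▸ mul_nonneg hr (hh ξ)

theorem PosSemidefR.posSemidef {h : ι → ι → ℝ} (hp : PosSemidefR h) (hs : SymmMatR h) :
    (of h).PosSemidef := by
  refine PosSemidef.of_dotProduct_mulVec_nonneg ?_ fun ξ => ?_
  · ext α β
    simp [hs β α]
  · simpa [quadR_eq_dotProduct_mulVec] using hp ξ

variable (c : ι → ι → ι → ℝ)

theorem sharpMatR_sub_left (a a' b : ι → ι → ℝ) :
    sharpMatR c (a - a') b = sharpMatR c a b - sharpMatR c a' b := by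
  ext α β
  simp only [sharpMatR, Pi.sub_apply, mul_sub, sub_mul, Finset.sum_sub_distrib]

theorem sharpMatR_sub_right (a b b' : ι → ι → ℝ) :
    sharpMatR c a (b - b') = sharpMatR c a b - sharpMatR c a b' := by
  ext α β
  simp only [sharpMatR, Pi.sub_apply, mul_sub, Finset.sum_sub_distrib]

theorem sharpSqR_sub_sharpSqR (h k : ι → ι → ℝ) :
    sharpSqR c h - sharpSqR c k
      = (1 / 2 : ℝ) • (sharpMatR c (h - k) h + sharpMatR c k (h - k)) := by
  have : sharpSqR c h - sharpSqR c k = (1 / 2 : ℝ) • (sharpMatR c h h - sharpMatR c k k) := by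
    ext α β
    simp only [sharpSqR, Pi.sub_apply, Pi.smul_apply, smul_eq_mul, mul_sub]
  rw [this, sharpMatR_sub_left, sharpMatR_sub_right, sub_add_sub_cancel]

def bracketVec (α : ι) : ι × ι → ℝ := fun p => c p.1 p.2 α

theorem sharpMatR_apply_eq_dotProduct_kronecker (a b : ι → ι → ℝ) (α β : ι) :
    sharpMatR c a b α β = bracketVec c α ⬝ᵥ ((of a ⊗ₖ of b) *ᵥ bracketVec c β) := by
  simp only [sharpMatR, bracketVec, dotProduct, mulVec, kronecker_apply, of_apply,
    Fintype.sum_prod_type, Finset.mul_sum]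
  ac_rfl

theorem quadR_sharpMatR (a b : ι → ι → ℝ) (ξ : ι → ℝ) :
    quadR (sharpMatR c a b) ξ
      = (∑ α, ξ α • bracketVec c α) ⬝ᵥ ((of a ⊗ₖ of b) *ᵥ ∑ β, ξ β • bracketVec c β) := by
  simp only [sum_smul_dotProduct_mulVec_sum_smul, quadR, sharpMatR_apply_eq_dotProduct_kronecker]

theorem posSemidefR_sharpMatR {a b : ι → ι → ℝ} (ha : (of a).PosSemidef)
    (hb : (of b).PosSemidef) : PosSemidefR (sharpMatR c a b) := fun ξ => by
  simpa [quadR_sharpMatR] using (ha.kronecker hb).dotProduct_mulVec_nonneg _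

end

/-- monotonicity of the sharp square: if `h, k ∈ Sym²(g)` are positive
semidefinite with `h ≥ k ≥ 0`, then `h# = (1/2) h # h` satisfies `h# ≥ k#`, where
`≥` means that the difference is positive semidefinite. -/
theorem sharpSq_monotone {ι : Type*} [Fintype ι] (L : Type*) [LieRing L] [LieAlgebra ℝ L]
    (b : Module.Basis ι ℝ L) (h k : ι → ι → ℝ)
    (hsymm : SymmMatR h) (ksymm : SymmMatR k)
    (kpsd : PosSemidefR k) (hk : PosSemidefR (h - k)) :
    PosSemidefR (sharpSqR (structConst L b) h - sharpSqR (structConst L b) k) := by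
  have hpsd : PosSemidefR h := sub_add_cancel h k ▸ hk.add kpsd
  have hh := hpsd.posSemidef hsymm
  have hd := hk.posSemidef (hsymm.sub ksymm)
  have hk' := kpsd.posSemidef ksymm
  rw [sharpSqR_sub_sharpSqR]
  exact ((posSemidefR_sharpMatR _ hd hh).add (posSemidefR_sharpMatR _ hk' hd)).smul
    (by norm_num)
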